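/- arXiv:solv-int/9805013 — 4 statements merged into one kernel-verified Lean document; each statement's English description precedes it below -/
import Mathlib

section
/- Let r be a negative irrational real number. Then the set {a + b·r : a, b ∈ ℕ} is dense in ℝ. -/
/-!
Modulo `1`, the multiples `b * r` (`b ∈ ℕ`) of an irrational number are dense in the circle, so
`{b * r + m : b ∈ ℕ, m ∈ ℤ}` is dense in `ℝ`. To approximate `x`, approximate instead
`x - N * r` for a large `N`: since `r < 0`, the integer `m` in the approximation
`b * r + m ≈ x - N * r` is then forced to be nonnegative, and `m + (N + b) * r ≈ x`.
-/

open Set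

theorem dense_nsmul_add_zsmul_of_irrational_div {a p : ℝ} [Fact (0 < p)]
    (h : Irrational (a / p)) : Dense {x : ℝ | ∃ (n : ℕ) (m : ℤ), x = n • a + m • p} := by
  have hθ : DenseRange (fun n : ℕ ↦ n • (a : AddCircle p)) :=
    denseRange_zsmul_iff_nsmul.1 (AddCircle.denseRange_zsmul_coe_iff.2 h)
  convert QuotientAddGroup.dense_preimage_mk.2 hθ using 1
  ext x
  simp only [mem_ofPred_eq, mem_preimage, mem_range, ← AddCircle.coe_nsmul, QuotientAddGroup.eq,
    AddSubgroup.mem_zmultiples_iff]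
  constructor
  · rintro ⟨n, m, rfl⟩
    exact ⟨n, m, by abel⟩
  · rintro ⟨n, m, hm⟩
    exact ⟨n, m, by rw [hm]; abel⟩

/-- If `r` is a negative irrational real number, then `{a + b·r : a, b ∈ ℕ}` is dense
in `ℝ`. -/
theorem dense_nat_add_nat_mul_irrational_neg (r : ℝ) (hirr : Irrational r) (hneg : r < 0) :
    Dense {x : ℝ | ∃ a b : ℕ, x = (a : ℝ) + (b : ℝ) * r} := by
  rw [Metric.dense_iff]
  intro x ε hε
  obtain ⟨N, hN⟩ := exists_nat_ge ((ε - x) / -r)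
  have hshift : ε ≤ x - N * r := by
    rw [div_le_iff₀ (neg_pos.2 hneg)] at hN
    linarith
  have hdense := dense_nsmul_add_zsmul_of_irrational_div (p := 1) (by rwa [div_one])
  obtain ⟨_, hball, n, m, rfl⟩ := Metric.dense_iff.1 hdense (x - N * r) ε hε
  rw [Metric.mem_ball, Real.dist_eq, nsmul_eq_mul, zsmul_one] at hball
  have hnr : (n : ℝ) * r ≤ 0 := mul_nonpos_of_nonneg_of_nonpos n.cast_nonneg hneg.le
  have hm : (0 : ℝ) ≤ m := by linarith [(abs_lt.1 hball).1]
  lift m to ℕ using mod_cast hm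
  refine ⟨m + (N + n : ℕ) * r, ?_, m, N + n, rfl⟩
  rw [Metric.mem_ball, Real.dist_eq]
  convert hball using 2
  push_cast
  ring
end

section
/- Work in R = MvPolynomial (Fin 3) ℂ with variables x, y, z and partial derivative operators ∂_x, ∂_y, ∂_z (pderiv). Fix a, b ∈ ℕ and r ∈ ℂ, and define the ℂ-linear operators on R: a₁(p) = ∂_x p − y²·∂_y p − y·z·∂_z p + b·y·p; a₂(p) = x²·∂_x p − ∂_y p − r·x·z·∂_z p − a·x·p; a₃(p) = 2·∂_x p − 2·y·∂_y p − (r+1)·z·∂_z p + (b−a)·p; a₄(p) = (r−1)·z·∂_z p + (a+b)·p. Then the ℂ-submodule of R spanned by the monomials x^i·y^j with 0 ≤ i ≤ a and 0 ≤ j ≤ b is nonzero, finite-dimensional, and mapped into itself by each of a₁, a₂, a₃, a₄. -/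
open MvPolynomial

/-- `a₁(p) = ∂ₓ p − y²·∂_y p − y·z·∂_z p + b·y·p`. -/
noncomputable def qcOp1 (b : ℕ) (p : MvPolynomial (Fin 3) ℂ) : MvPolynomial (Fin 3) ℂ :=
  pderiv 0 p - X 1 ^ 2 * pderiv 1 p - X 1 * X 2 * pderiv 2 p + C (b : ℂ) * X 1 * p

/-- `a₂(p) = x²·∂ₓ p − ∂_y p − r·x·z·∂_z p − a·x·p`. -/
noncomputable def qcOp2 (a : ℕ) (r : ℂ) (p : MvPolynomial (Fin 3) ℂ) :
    MvPolynomial (Fin 3) ℂ :=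
  X 0 ^ 2 * pderiv 0 p - pderiv 1 p - C r * X 0 * X 2 * pderiv 2 p - C (a : ℂ) * X 0 * p

/-- `a₃(p) = 2·∂ₓ p − 2·y·∂_y p − (r+1)·z·∂_z p + (b−a)·p`. -/
noncomputable def qcOp3 (a b : ℕ) (r : ℂ) (p : MvPolynomial (Fin 3) ℂ) :
    MvPolynomial (Fin 3) ℂ :=
  2 * pderiv 0 p - 2 * X 1 * pderiv 1 p - C (r + 1) * X 2 * pderiv 2 p
    + C ((b : ℂ) - (a : ℂ)) * p

/-- `a₄(p) = (r−1)·z·∂_z p + (a+b)·p`. -/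
noncomputable def qcOp4 (a b : ℕ) (r : ℂ) (p : MvPolynomial (Fin 3) ℂ) :
    MvPolynomial (Fin 3) ℂ :=
  C (r - 1) * X 2 * pderiv 2 p + C ((a : ℂ) + (b : ℂ)) * p

/-! The `z·∂_z` terms kill every polynomial in `x, y`, so on a monomial `xⁱyʲ` the operators
produce multiples of `xⁱ⁻¹yʲ`, `xⁱyʲ⁻¹`, `xⁱyʲ`, `xⁱ⁺¹yʲ` and `xⁱyʲ⁺¹`. Only the last two can
leave the box `i ≤ a, j ≤ b`, and their coefficients `i − a` and `b − j` vanish exactly on its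
boundary. -/

section Monomials

variable {R : Type*} [CommSemiring R]

-- The truncated `i - 1` is harmless at `i = 0`, where the coefficient vanishes.
lemma pderiv_zero_X_pow_mul_X_pow (i j : ℕ) :
    pderiv 0 (X 0 ^ i * X 1 ^ j : MvPolynomial (Fin 3) R) =
      (i : R) • (X 0 ^ (i - 1) * X 1 ^ j) := by
  simp [Derivation.leibniz_pow, smul_eq_C_mul]
  ring

lemma pderiv_one_X_pow_mul_X_pow (i j : ℕ) :
    pderiv 1 (X 0 ^ i * X 1 ^ j : MvPolynomial (Fin 3) R) =
      (j : R) • (X 0 ^ i * X 1 ^ (j - 1)) := by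
  simp [Derivation.leibniz_pow, smul_eq_C_mul]
  ring

lemma pderiv_two_X_pow_mul_X_pow (i j : ℕ) :
    pderiv 2 (X 0 ^ i * X 1 ^ j : MvPolynomial (Fin 3) R) = 0 := by
  simp [Derivation.leibniz_pow]

end Monomials

lemma qcOp1_X_pow_mul_X_pow (b i j : ℕ) :
    qcOp1 b (X 0 ^ i * X 1 ^ j) =
      (i : ℂ) • (X 0 ^ (i - 1) * X 1 ^ j) + ((b : ℂ) - j) • (X 0 ^ i * X 1 ^ (j + 1)) := by
  rw [qcOp1, pderiv_zero_X_pow_mul_X_pow, pderiv_one_X_pow_mul_X_pow, pderiv_two_X_pow_mul_X_pow]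
  cases j <;> simp [smul_eq_C_mul] <;> ring

lemma qcOp2_X_pow_mul_X_pow (a : ℕ) (r : ℂ) (i j : ℕ) :
    qcOp2 a r (X 0 ^ i * X 1 ^ j) =
      ((i : ℂ) - a) • (X 0 ^ (i + 1) * X 1 ^ j) - (j : ℂ) • (X 0 ^ i * X 1 ^ (j - 1)) := by
  rw [qcOp2, pderiv_zero_X_pow_mul_X_pow, pderiv_one_X_pow_mul_X_pow, pderiv_two_X_pow_mul_X_pow]
  cases i <;> simp [smul_eq_C_mul] <;> ring

lemma qcOp3_X_pow_mul_X_pow (a b : ℕ) (r : ℂ) (i j : ℕ) :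
    qcOp3 a b r (X 0 ^ i * X 1 ^ j) =
      (2 * i : ℂ) • (X 0 ^ (i - 1) * X 1 ^ j) +
        ((b : ℂ) - a - 2 * j) • (X 0 ^ i * X 1 ^ j) := by
  rw [qcOp3, pderiv_zero_X_pow_mul_X_pow, pderiv_one_X_pow_mul_X_pow, pderiv_two_X_pow_mul_X_pow,
    ← map_ofNat C 2]
  cases j <;> simp [smul_eq_C_mul] <;> ring

lemma qcOp4_X_pow_mul_X_pow (a b : ℕ) (r : ℂ) (i j : ℕ) :
    qcOp4 a b r (X 0 ^ i * X 1 ^ j) = ((a : ℂ) + b) • (X 0 ^ i * X 1 ^ j) := by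
  rw [qcOp4, pderiv_two_X_pow_mul_X_pow, mul_zero, zero_add, smul_eq_C_mul]

lemma isLinearMap_qcOp1 (b : ℕ) : IsLinearMap ℂ (qcOp1 b) where
  map_add p q := by simp only [qcOp1, map_add]; ring
  map_smul c p := by simp only [qcOp1, smul_eq_C_mul, pderiv_C_mul]; ring

lemma isLinearMap_qcOp2 (a : ℕ) (r : ℂ) : IsLinearMap ℂ (qcOp2 a r) where
  map_add p q := by simp only [qcOp2, map_add]; ring
  map_smul c p := by simp only [qcOp2, smul_eq_C_mul, pderiv_C_mul]; ring

lemma isLinearMap_qcOp3 (a b : ℕ) (r : ℂ) : IsLinearMap ℂ (qcOp3 a b r) where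
  map_add p q := by simp only [qcOp3, map_add]; ring
  map_smul c p := by simp only [qcOp3, smul_eq_C_mul, pderiv_C_mul]; ring

lemma isLinearMap_qcOp4 (a b : ℕ) (r : ℂ) : IsLinearMap ℂ (qcOp4 a b r) where
  map_add p q := by simp only [qcOp4, map_add]; ring
  map_smul c p := by simp only [qcOp4, smul_eq_C_mul, pderiv_C_mul]; ring

lemma IsLinearMap.mapsTo_span_of_mapsTo {R M : Type*} [Semiring R] [AddCommMonoid M] [Module R M]
    {f : M → M} (hf : IsLinearMap R f) {s : Set M} (h : Set.MapsTo f s (Submodule.span R s)) :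
    Set.MapsTo f (Submodule.span R s) (Submodule.span R s) := fun _ hp =>
  (Submodule.map_span_le (hf.mk' f) s _).mpr h (Submodule.mem_map_of_mem hp)

section MonomialBox

variable (R : Type*) [CommSemiring R] (a b : ℕ)

def monomialBox : Set (MvPolynomial (Fin 3) R) :=
  {p | ∃ i j : ℕ, i ≤ a ∧ j ≤ b ∧ p = X 0 ^ i * X 1 ^ j}

lemma monomialBox_finite : (monomialBox R a b).Finite := by
  refine (((Set.finite_Iic a).prod (Set.finite_Iic b)).image
    fun ij : ℕ × ℕ => (X 0 ^ ij.1 * X 1 ^ ij.2 : MvPolynomial (Fin 3) R)).subset ?_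
  rintro _ ⟨i, j, hi, hj, rfl⟩
  exact ⟨(i, j), ⟨hi, hj⟩, rfl⟩

variable {R a b}

lemma X_pow_mul_X_pow_mem_span_monomialBox {i j : ℕ} (hi : i ≤ a) (hj : j ≤ b) :
    X 0 ^ i * X 1 ^ j ∈ Submodule.span R (monomialBox R a b) :=
  Submodule.subset_span ⟨i, j, hi, hj, rfl⟩

lemma smul_X_pow_mul_X_pow_mem_span_monomialBox {c : R} {i j : ℕ}
    (h : c ≠ 0 → i ≤ a ∧ j ≤ b) :
    c • (X 0 ^ i * X 1 ^ j) ∈ Submodule.span R (monomialBox R a b) := by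
  obtain rfl | hc := eq_or_ne c 0
  · rw [zero_smul]
    exact zero_mem _
  · exact Submodule.smul_mem _ c (X_pow_mul_X_pow_mem_span_monomialBox (h hc).1 (h hc).2)

lemma span_monomialBox_ne_bot [Nontrivial R] : Submodule.span R (monomialBox R a b) ≠ ⊥ := by
  refine (Submodule.ne_bot_iff _).mpr ⟨1, ?_, one_ne_zero⟩
  simpa using X_pow_mul_X_pow_mem_span_monomialBox (R := R) (Nat.zero_le a) (Nat.zero_le b)

end MonomialBox

section Invariance

variable {a b : ℕ} (r : ℂ)

lemma mapsTo_qcOp1_span_monomialBox :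
    Set.MapsTo (qcOp1 b) (Submodule.span ℂ (monomialBox ℂ a b))
      (Submodule.span ℂ (monomialBox ℂ a b)) := by
  refine (isLinearMap_qcOp1 b).mapsTo_span_of_mapsTo ?_
  rintro _ ⟨i, j, hi, hj, rfl⟩
  rw [qcOp1_X_pow_mul_X_pow]
  refine add_mem
    (smul_X_pow_mul_X_pow_mem_span_monomialBox fun _ => ⟨(i.sub_le 1).trans hi, hj⟩)
    (smul_X_pow_mul_X_pow_mem_span_monomialBox fun hc => ⟨hi, hj.lt_of_ne ?_⟩)
  rintro rfl
  exact hc (sub_self _)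

lemma mapsTo_qcOp2_span_monomialBox :
    Set.MapsTo (qcOp2 a r) (Submodule.span ℂ (monomialBox ℂ a b))
      (Submodule.span ℂ (monomialBox ℂ a b)) := by
  refine (isLinearMap_qcOp2 a r).mapsTo_span_of_mapsTo ?_
  rintro _ ⟨i, j, hi, hj, rfl⟩
  rw [qcOp2_X_pow_mul_X_pow]
  refine sub_mem (smul_X_pow_mul_X_pow_mem_span_monomialBox fun hc => ⟨hi.lt_of_ne ?_, hj⟩)
    (smul_X_pow_mul_X_pow_mem_span_monomialBox fun _ => ⟨hi, (j.sub_le 1).trans hj⟩)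
  rintro rfl
  exact hc (sub_self _)

lemma mapsTo_qcOp3_span_monomialBox :
    Set.MapsTo (qcOp3 a b r) (Submodule.span ℂ (monomialBox ℂ a b))
      (Submodule.span ℂ (monomialBox ℂ a b)) := by
  refine (isLinearMap_qcOp3 a b r).mapsTo_span_of_mapsTo ?_
  rintro _ ⟨i, j, hi, hj, rfl⟩
  rw [qcOp3_X_pow_mul_X_pow]
  exact add_mem (smul_X_pow_mul_X_pow_mem_span_monomialBox fun _ => ⟨(i.sub_le 1).trans hi, hj⟩)
    (smul_X_pow_mul_X_pow_mem_span_monomialBox fun _ => ⟨hi, hj⟩)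

lemma mapsTo_qcOp4_span_monomialBox :
    Set.MapsTo (qcOp4 a b r) (Submodule.span ℂ (monomialBox ℂ a b))
      (Submodule.span ℂ (monomialBox ℂ a b)) := by
  refine (isLinearMap_qcOp4 a b r).mapsTo_span_of_mapsTo ?_
  rintro _ ⟨i, j, hi, hj, rfl⟩
  rw [qcOp4_X_pow_mul_X_pow]
  exact smul_X_pow_mul_X_pow_mem_span_monomialBox fun _ => ⟨hi, hj⟩

end Invariance

/-- The span of the monomials `x^i·y^j`, `0 ≤ i ≤ a`, `0 ≤ j ≤ b`, is a nonzero,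
finite-dimensional subspace invariant under the four operators `a₁, a₂, a₃, a₄` of
Example 1. -/
theorem monomial_span_invariant_counterexample1 (a b : ℕ) (r : ℂ) :
    Submodule.span ℂ {p : MvPolynomial (Fin 3) ℂ |
        ∃ i j : ℕ, i ≤ a ∧ j ≤ b ∧ p = X 0 ^ i * X 1 ^ j} ≠ ⊥ ∧
    FiniteDimensional ℂ (Submodule.span ℂ {p : MvPolynomial (Fin 3) ℂ |
        ∃ i j : ℕ, i ≤ a ∧ j ≤ b ∧ p = X 0 ^ i * X 1 ^ j}) ∧
    ∀ p ∈ Submodule.span ℂ {p : MvPolynomial (Fin 3) ℂ |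
        ∃ i j : ℕ, i ≤ a ∧ j ≤ b ∧ p = X 0 ^ i * X 1 ^ j},
      qcOp1 b p ∈ Submodule.span ℂ {p : MvPolynomial (Fin 3) ℂ |
        ∃ i j : ℕ, i ≤ a ∧ j ≤ b ∧ p = X 0 ^ i * X 1 ^ j} ∧
      qcOp2 a r p ∈ Submodule.span ℂ {p : MvPolynomial (Fin 3) ℂ |
        ∃ i j : ℕ, i ≤ a ∧ j ≤ b ∧ p = X 0 ^ i * X 1 ^ j} ∧
      qcOp3 a b r p ∈ Submodule.span ℂ {p : MvPolynomial (Fin 3) ℂ |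
        ∃ i j : ℕ, i ≤ a ∧ j ≤ b ∧ p = X 0 ^ i * X 1 ^ j} ∧
      qcOp4 a b r p ∈ Submodule.span ℂ {p : MvPolynomial (Fin 3) ℂ |
        ∃ i j : ℕ, i ≤ a ∧ j ≤ b ∧ p = X 0 ^ i * X 1 ^ j} :=
  ⟨span_monomialBox_ne_bot, FiniteDimensional.span_of_finite ℂ (monomialBox_finite ℂ a b),
    fun p hp => ⟨mapsTo_qcOp1_span_monomialBox hp, mapsTo_qcOp2_span_monomialBox r hp,
      mapsTo_qcOp3_span_monomialBox r hp, mapsTo_qcOp4_span_monomialBox r hp⟩⟩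
end

section
/- Let R = MvPolynomial (Fin 2) ℂ with variables x, y, let u = 1 − x·y, and let A = Localization.Away u, writing x, y, u also for their images in A (u is invertible in A). Let D_x and D_y be the unique derivations of A extending the partial derivatives ∂_x and ∂_y of R. Fix λ ∈ ℤ and a natural number k with k + λ ≥ 0, and let S_k ⊆ A be the ℂ-span of the elements x^i·y^j·u^{−k} for 0 ≤ i ≤ k + λ and 0 ≤ j ≤ k. Then S_k is mapped into itself by each of the ℂ-linear operators D₁(f) = D_x f − y²·D_y f, D₂(f) = 2x·D_x f − 2y·D_y f − λ·f, D₃(f) = x²·D_x f − D_y f − λ·x·f. -/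
open MvPolynomial

/-- The polynomial ring `ℂ[x,y]`. -/
abbrev qcR : Type := MvPolynomial (Fin 2) ℂ

/-- `u = 1 − x·y`. -/
noncomputable def qcU : qcR := 1 - X 0 * X 1

/-- The localization `A` of `ℂ[x,y]` at the powers of `u = 1 − xy`. -/
abbrev qcA : Type := Localization.Away qcU

/-- `S_k`: the `ℂ`-span of the elements `x^i·y^j·u^{−k}` for `0 ≤ i ≤ k + λ`,
`0 ≤ j ≤ k`, where `v = u⁻¹`. -/
noncomputable def qcSk (lam : ℤ) (k : ℕ) (v : qcA) : Submodule ℂ qcA :=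
  Submodule.span ℂ {f : qcA | ∃ i j : ℕ, (i : ℤ) ≤ (k : ℤ) + lam ∧ j ≤ k ∧
    f = algebraMap qcR qcA (X 0 ^ i * X 1 ^ j) * v ^ k}

/-!
On a monomial `m = x^i y^j u^{-k}` the derivations act by
`D_x m = i x^{i-1} y^j u^{-k} + k x^i y^{j+1} u^{-k-1}` (as `D_x u⁻¹ = y u⁻²`), and symmetrically
for `D_y`. In each `Dᵢ m` the terms with `u^{-k-1}` combine into a multiple of
`(1 - xy) u^{-k-1} = u^{-k}`, leaving
`D₁ m = i x^{i-1} y^j u^{-k} + (k - j) x^i y^{j+1} u^{-k}`, `D₂ m = (2i - 2j - λ) m` and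
`D₃ m = (i - k - λ) x^{i+1} y^j u^{-k} - j x^i y^{j-1} u^{-k}`: a coefficient vanishes exactly
when an exponent would leave the box `i ≤ k + λ`, `j ≤ k`.
-/

theorem natCast_mul_pow_sub_one_mul {A : Type*} [Semiring A] (n : ℕ) (x : A) :
    (n : A) * (x ^ (n - 1) * x) = n * x ^ n := by
  cases n <;> simp [pow_succ]

theorem zsmul_mem_of_ne_zero {M S : Type*} [AddGroup M] [SetLike S M] [AddSubgroupClass S M]
    {s : S} {n : ℤ} {x : M} (h : n ≠ 0 → x ∈ s) : n • x ∈ s := by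
  rcases eq_or_ne n 0 with rfl | hn
  · simp [zero_mem]
  · exact zsmul_mem (h hn) n

section

variable {R A : Type*} [CommRing R] [CommRing A] [Algebra R A]

theorem Derivation.map_monomial_of_map_eq (D : Derivation R A A) {a b v : A} (ha : D a = 1)
    (hb : D b = 0) (hv : (1 - a * b) * v = 1) (i j k : ℕ) :
    D (a ^ i * b ^ j * v ^ k) =
      i * (a ^ (i - 1) * b ^ j * v ^ k) + k * (a ^ i * b ^ (j + 1) * v ^ (k + 1)) := by
  have hDv : D v = b * v ^ 2 := by
    rw [D.leibniz_of_mul_eq_one (b := 1 - a * b) (by rw [mul_comm, hv]), map_sub,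
      Derivation.map_one_eq_zero, D.leibniz, ha, hb]
    simp only [smul_eq_mul]
    ring
  rw [D.leibniz, D.leibniz, D.leibniz_pow, D.leibniz_pow, D.leibniz_pow, ha, hb, hDv]
  simp only [smul_eq_mul, nsmul_eq_mul]
  linear_combination (a ^ i * b ^ (j + 1) * v) * natCast_mul_pow_sub_one_mul k v

namespace Sl2TwoDim

structure IsCoordinateDerivationPair (Dx Dy : Derivation R A A) (a b : A) : Prop where
  dx_left : Dx a = 1
  dx_right : Dx b = 0
  dy_left : Dy a = 0
  dy_right : Dy b = 1

variable (R) in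
def monomialBoxSpan (a b v : A) (lam : ℤ) (k : ℕ) :
    Submodule R A :=
  Submodule.span R
    {f : A | ∃ i j : ℕ, (i : ℤ) ≤ k + lam ∧ j ≤ k ∧ f = a ^ i * b ^ j * v ^ k}

namespace IsCoordinateDerivationPair

variable {Dx Dy : Derivation R A A} {a b v : A}

theorem dx_monomial (hD : IsCoordinateDerivationPair Dx Dy a b) (hv : (1 - a * b) * v = 1)
    (i j k : ℕ) :
    Dx (a ^ i * b ^ j * v ^ k) =
      i * (a ^ (i - 1) * b ^ j * v ^ k) + k * (a ^ i * b ^ (j + 1) * v ^ (k + 1)) :=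
  Dx.map_monomial_of_map_eq hD.dx_left hD.dx_right hv i j k

theorem dy_monomial (hD : IsCoordinateDerivationPair Dx Dy a b) (hv : (1 - a * b) * v = 1)
    (i j k : ℕ) :
    Dy (a ^ i * b ^ j * v ^ k) =
      j * (a ^ i * b ^ (j - 1) * v ^ k) + k * (a ^ (i + 1) * b ^ j * v ^ (k + 1)) := by
  have h := Dy.map_monomial_of_map_eq hD.dy_right hD.dy_left (by rwa [mul_comm b]) j i k
  rw [mul_comm (a ^ i), h]
  ring

end IsCoordinateDerivationPair

variable (Dx Dy : Derivation R A A) (a b : A) (lam : ℤ)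

def D₁ : A →ₗ[R] A := Dx.toLinearMap - LinearMap.mulLeft R (b ^ 2) ∘ₗ Dy.toLinearMap

def D₂ : A →ₗ[R] A :=
  LinearMap.mulLeft R (2 * a) ∘ₗ Dx.toLinearMap
    - LinearMap.mulLeft R (2 * b) ∘ₗ Dy.toLinearMap
    - (lam : R) • LinearMap.id

def D₃ : A →ₗ[R] A :=
  LinearMap.mulLeft R (a ^ 2) ∘ₗ Dx.toLinearMap - Dy.toLinearMap
    - (lam : R) • LinearMap.mulLeft R a

variable {Dx Dy a b lam}

theorem D₁_apply (f : A) : D₁ Dx Dy b f = Dx f - b ^ 2 * Dy f := rfl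

theorem D₂_apply (f : A) :
    D₂ Dx Dy a b lam f = 2 * a * Dx f - 2 * b * Dy f - (lam : R) • f := rfl

theorem D₃_apply (f : A) : D₃ Dx Dy a lam f = a ^ 2 * Dx f - Dy f - (lam : R) • (a * f) := rfl

variable {v : A}

theorem D₁_monomial (hD : IsCoordinateDerivationPair Dx Dy a b) (hv : (1 - a * b) * v = 1)
    (i j k : ℕ) :
    D₁ Dx Dy b (a ^ i * b ^ j * v ^ k) =
      (i : ℤ) • (a ^ (i - 1) * b ^ j * v ^ k)
        + ((k : ℤ) - j) • (a ^ i * b ^ (j + 1) * v ^ k) := by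
  rw [D₁_apply, hD.dx_monomial hv, hD.dy_monomial hv]
  simp only [zsmul_eq_mul]
  push_cast
  linear_combination (k * a ^ i * b ^ (j + 1) * v ^ k) * hv
    - (a ^ i * b * v ^ k) * natCast_mul_pow_sub_one_mul j b

theorem D₂_monomial (hD : IsCoordinateDerivationPair Dx Dy a b) (hv : (1 - a * b) * v = 1)
    (i j k : ℕ) :
    D₂ Dx Dy a b lam (a ^ i * b ^ j * v ^ k) =
      (2 * i - 2 * j - lam : ℤ) • (a ^ i * b ^ j * v ^ k) := by
  rw [D₂_apply, Int.cast_smul_eq_zsmul, hD.dx_monomial hv, hD.dy_monomial hv]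
  simp only [zsmul_eq_mul]
  push_cast
  linear_combination (2 * b ^ j * v ^ k) * natCast_mul_pow_sub_one_mul i a
    - (2 * a ^ i * v ^ k) * natCast_mul_pow_sub_one_mul j b

theorem D₃_monomial (hD : IsCoordinateDerivationPair Dx Dy a b) (hv : (1 - a * b) * v = 1)
    (i j k : ℕ) :
    D₃ Dx Dy a lam (a ^ i * b ^ j * v ^ k) =
      ((i : ℤ) - k - lam) • (a ^ (i + 1) * b ^ j * v ^ k)
        - (j : ℤ) • (a ^ i * b ^ (j - 1) * v ^ k) := by
  rw [D₃_apply, Int.cast_smul_eq_zsmul, hD.dx_monomial hv, hD.dy_monomial hv]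
  simp only [zsmul_eq_mul]
  push_cast
  linear_combination (a * b ^ j * v ^ k) * natCast_mul_pow_sub_one_mul i a
    - (k * a ^ (i + 1) * b ^ j * v ^ k) * hv

variable {k : ℕ}

theorem monomial_mem_monomialBoxSpan {i j : ℕ} (hi : (i : ℤ) ≤ k + lam) (hj : j ≤ k) :
    a ^ i * b ^ j * v ^ k ∈ monomialBoxSpan R a b v lam k :=
  Submodule.subset_span ⟨i, j, hi, hj, rfl⟩

theorem map_mem_monomialBoxSpan_of_monomial (L : A →ₗ[R] A)
    (h : ∀ i j : ℕ, (i : ℤ) ≤ k + lam → j ≤ k →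
      L (a ^ i * b ^ j * v ^ k) ∈ monomialBoxSpan R a b v lam k)
    {f : A} (hf : f ∈ monomialBoxSpan R a b v lam k) : L f ∈ monomialBoxSpan R a b v lam k := by
  refine (Submodule.span_le (p := (monomialBoxSpan R a b v lam k).comap L)).mpr ?_ hf
  rintro _ ⟨i, j, hi, hj, rfl⟩
  exact h i j hi hj

variable {f : A}

theorem D₁_mem (hD : IsCoordinateDerivationPair Dx Dy a b) (hv : (1 - a * b) * v = 1)
    (hf : f ∈ monomialBoxSpan R a b v lam k) :
    D₁ Dx Dy b f ∈ monomialBoxSpan R a b v lam k := by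
  refine map_mem_monomialBoxSpan_of_monomial _ (fun i j hi hj => ?_) hf
  rw [D₁_monomial hD hv]
  exact add_mem (zsmul_mem (monomial_mem_monomialBoxSpan (by omega) hj) _)
    (zsmul_mem_of_ne_zero fun hne => monomial_mem_monomialBoxSpan hi (by omega))

theorem D₂_mem (hD : IsCoordinateDerivationPair Dx Dy a b) (hv : (1 - a * b) * v = 1)
    (hf : f ∈ monomialBoxSpan R a b v lam k) :
    D₂ Dx Dy a b lam f ∈ monomialBoxSpan R a b v lam k := by
  refine map_mem_monomialBoxSpan_of_monomial _ (fun i j hi hj => ?_) hf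
  rw [D₂_monomial hD hv]
  exact zsmul_mem (monomial_mem_monomialBoxSpan hi hj) _

theorem D₃_mem (hD : IsCoordinateDerivationPair Dx Dy a b) (hv : (1 - a * b) * v = 1)
    (hf : f ∈ monomialBoxSpan R a b v lam k) :
    D₃ Dx Dy a lam f ∈ monomialBoxSpan R a b v lam k := by
  refine map_mem_monomialBoxSpan_of_monomial _ (fun i j hi hj => ?_) hf
  rw [D₃_monomial hD hv]
  exact sub_mem (zsmul_mem_of_ne_zero fun hne => monomial_mem_monomialBoxSpan (by omega) hj)
    (zsmul_mem (monomial_mem_monomialBoxSpan hi (by omega)) _)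

end Sl2TwoDim

end

open Sl2TwoDim

theorem sl2_twoDim_module_invariant_general (lam : ℤ) (k : ℕ)
    (v : qcA) (hv : algebraMap qcR qcA qcU * v = 1)
    (Dx Dy : Derivation ℂ qcA qcA)
    (hDx : ∀ p : qcR, Dx (algebraMap qcR qcA p) = algebraMap qcR qcA (pderiv 0 p))
    (hDy : ∀ p : qcR, Dy (algebraMap qcR qcA p) = algebraMap qcR qcA (pderiv 1 p)) :
    ∀ f ∈ qcSk lam k v,
      (Dx f - algebraMap qcR qcA (X 1) ^ 2 * Dy f ∈ qcSk lam k v) ∧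
      (2 * algebraMap qcR qcA (X 0) * Dx f - 2 * algebraMap qcR qcA (X 1) * Dy f
          - (lam : ℂ) • f ∈ qcSk lam k v) ∧
      (algebraMap qcR qcA (X 0) ^ 2 * Dx f - Dy f
          - (lam : ℂ) • (algebraMap qcR qcA (X 0) * f) ∈ qcSk lam k v) := by
  have hD : IsCoordinateDerivationPair Dx Dy (algebraMap qcR qcA (X 0))
      (algebraMap qcR qcA (X 1)) := by
    constructor <;> simp [hDx, hDy, pderiv_X]
  have hu : (1 - algebraMap qcR qcA (X 0) * algebraMap qcR qcA (X 1)) * v = 1 := by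
    simpa [qcU] using hv
  have hS : qcSk lam k v = monomialBoxSpan ℂ (algebraMap qcR qcA (X 0))
      (algebraMap qcR qcA (X 1)) v lam k := by
    simp only [qcSk, monomialBoxSpan, map_mul, map_pow]
  intro f hf
  rw [hS] at hf ⊢
  exact ⟨D₁_mem hD hu hf, D₂_mem hD hu hf, D₃_mem hD hu hf⟩

/-- The module `S_k` is invariant under the three first-order operators
`D₁ = Dₓ − y²·D_y`, `D₂ = 2x·Dₓ − 2y·D_y − λ`, `D₃ = x²·Dₓ − D_y − λx` realizing
`sl(2,ℂ)` with cocycle parameter `λ`. -/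
theorem sl2_twoDim_module_invariant (lam : ℤ) (k : ℕ) (hk : 0 ≤ (k : ℤ) + lam)
    (v : qcA) (hv : algebraMap qcR qcA qcU * v = 1)
    (Dx Dy : Derivation ℂ qcA qcA)
    (hDx : ∀ p : qcR, Dx (algebraMap qcR qcA p) = algebraMap qcR qcA (pderiv 0 p))
    (hDy : ∀ p : qcR, Dy (algebraMap qcR qcA p) = algebraMap qcR qcA (pderiv 1 p)) :
    ∀ f ∈ qcSk lam k v,
      (Dx f - algebraMap qcR qcA (X 1) ^ 2 * Dy f ∈ qcSk lam k v) ∧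
      (2 * algebraMap qcR qcA (X 0) * Dx f - 2 * algebraMap qcR qcA (X 1) * Dy f
          - (lam : ℂ) • f ∈ qcSk lam k v) ∧
      (algebraMap qcR qcA (X 0) ^ 2 * Dx f - Dy f
          - (lam : ℂ) • (algebraMap qcR qcA (X 0) * f) ∈ qcSk lam k v) :=
  sl2_twoDim_module_invariant_general lam k v hv Dx Dy hDx hDy
end

section
/- Let R = MvPolynomial (Fin 2) ℂ with variables x, y, let u = 1 − x·y, and let A = Localization.Away u, writing x, y, u also for their images in A. Fix λ ∈ ℤ and a natural number k with k + λ ≥ 0. Then the family of elements x^i·y^j·u^{−k} of A, indexed by pairs (i,j) with 0 ≤ i ≤ k + λ and 0 ≤ j ≤ k, is linearly independent over ℂ; consequently the ℂ-span S_k of these elements has dimension (k + λ + 1)·(k + 1). -/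
open MvPolynomial

lemma qcU_ne_zero : qcU ≠ 0 := by
  intro h
  have : constantCoeff qcU = 1 := by simp [qcU]
  rw [h] at this; simp at this

/-- The family `x^i·y^j·u^{−k}`, indexed by pairs `(i,j)` with `0 ≤ i ≤ k + λ` and
`0 ≤ j ≤ k`, is linearly independent over `ℂ`; consequently `S_k` has dimension
`(k + λ + 1)·(k + 1)`. -/
theorem qcSk_linearIndependent_and_finrank (lam : ℤ) (k : ℕ) (hk : 0 ≤ (k : ℤ) + lam)
    (v : qcA) (hv : algebraMap qcR qcA qcU * v = 1) :
    LinearIndependent ℂ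
      (fun p : {ij : ℕ × ℕ // (ij.1 : ℤ) ≤ (k : ℤ) + lam ∧ ij.2 ≤ k} =>
        algebraMap qcR qcA (X 0 ^ p.1.1 * X 1 ^ p.1.2) * v ^ k) ∧
    Module.finrank ℂ (qcSk lam k v) = ((k : ℤ) + lam + 1).toNat * (k + 1) := by
  set ι := {ij : ℕ × ℕ // (ij.1 : ℤ) ≤ (k : ℤ) + lam ∧ ij.2 ≤ k}
  -- the monomial exponent map
  set d : ι → (Fin 2 →₀ ℕ) := fun p => Finsupp.single 0 p.1.1 + Finsupp.single 1 p.1.2 with hd_def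
  have hd : Function.Injective d := by
    intro p q h
    have h0 := DFunLike.congr_fun h 0
    have h1 := DFunLike.congr_fun h 1
    simp [hd_def, Finsupp.single_apply, Fin.ext_iff] at h0 h1
    exact Subtype.ext (Prod.ext h0 h1)
  have hmono : LinearIndependent ℂ (fun p : ι => (X 0 ^ p.1.1 * X 1 ^ p.1.2 : qcR)) := by
    have := ((MvPolynomial.basisMonomials (Fin 2) ℂ).linearIndependent).comp d hd
    have heq : ((MvPolynomial.basisMonomials (Fin 2) ℂ) ∘ d)
        = fun p : ι => (X 0 ^ p.1.1 * X 1 ^ p.1.2 : qcR) := by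
      funext p
      simp [hd_def, X_pow_eq_monomial, monomial_mul]
    rwa [heq] at this
  -- the linear map
  have hinjalg : Function.Injective (algebraMap qcR qcA) := by
    apply IsLocalization.injective qcA (M := Submonoid.powers qcU)
    exact powers_le_nonZeroDivisors_of_noZeroDivisors qcU_ne_zero
  have hvunit : IsUnit (v ^ k) := by
    have : IsUnit v := IsUnit.of_mul_eq_one _ ((mul_comm _ _).trans hv)
    exact this.pow k
  set L : qcR →ₗ[ℂ] qcA :=
    (LinearMap.mulRight ℂ (v ^ k)).comp ((Algebra.linearMap qcR qcA).restrictScalars ℂ) with hL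
  have hLinj : Function.Injective L := by
    intro a b hab
    simp only [hL, LinearMap.comp_apply, LinearMap.mulRight_apply,
      LinearMap.coe_restrictScalars, Algebra.linearMap_apply] at hab
    exact hinjalg (hvunit.mul_left_cancel ((mul_comm _ _).trans (hab.trans (mul_comm _ _))))
  have hli : LinearIndependent ℂ
      (fun p : ι => algebraMap qcR qcA (X 0 ^ p.1.1 * X 1 ^ p.1.2) * v ^ k) := by
    have h := hmono.map' L (LinearMap.ker_eq_bot.mpr hLinj)
    have heq2 : (⇑L ∘ fun p : ι => (X 0 ^ p.1.1 * X 1 ^ p.1.2 : qcR))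
        = fun p : ι => algebraMap qcR qcA (X 0 ^ p.1.1 * X 1 ^ p.1.2) * v ^ k := by
      funext p
      simp [hL]
    rwa [heq2] at h
  refine ⟨hli, ?_⟩
  -- span set equals range
  have hset : {f : qcA | ∃ i j : ℕ, (i : ℤ) ≤ (k : ℤ) + lam ∧ j ≤ k ∧
      f = algebraMap qcR qcA (X 0 ^ i * X 1 ^ j) * v ^ k}
      = Set.range (fun p : ι => algebraMap qcR qcA (X 0 ^ p.1.1 * X 1 ^ p.1.2) * v ^ k) := by
    ext f
    constructor
    · rintro ⟨i, j, hi, hj, rfl⟩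
      exact ⟨⟨(i, j), hi, hj⟩, rfl⟩
    · rintro ⟨⟨⟨i, j⟩, hi, hj⟩, rfl⟩
      exact ⟨i, j, hi, hj, rfl⟩
  -- fintype
  have e : ι ≃ Fin (((k : ℤ) + lam).toNat + 1) × Fin (k + 1) :=
    { toFun := fun p => (⟨p.1.1, by omega⟩, ⟨p.1.2, by omega⟩)
      invFun := fun q => ⟨(q.1.1, q.2.1), by omega, by omega⟩
      left_inv := fun p => rfl
      right_inv := fun q => rfl }
  have : Fintype ι := Fintype.ofEquiv _ e.symm
  rw [qcSk, hset, finrank_span_eq_card hli, Fintype.card_congr e]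
  simp only [Fintype.card_prod, Fintype.card_fin]
  have h3 : ((k : ℤ) + lam).toNat + 1 = ((k : ℤ) + lam + 1).toNat := by omega
  rw [h3]
end
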